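/- arXiv:2005.05465 — 8 statements merged into one kernel-verified Lean document; each statement's English description precedes it below -/
import Mathlib

section
/- For ω > 0 and any natural number k ≥ 1, the minimum over n ∈ {0, 1, ..., k} of E(n) equals -ω, and E(n) = -ω implies n ≥ 1 (i.e., at least one literal is satisfied). -/
lemma choose_two_ge (n : ℕ) : (n : ℝ) - 1 ≤ (n.choose 2 : ℝ) := by
  cases n with
  | zero => simp
  | succ m =>
    have h : m ≤ (m + 1).choose 2 := by
      rw [Nat.choose_succ_succ]
      simp
    have := Nat.cast_le (α := ℝ).2 h
    push_cast at this ⊢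
    linarith

/-- For `E(n) = -n·ω + (n choose 2)·ω` with `ω > 0` and any `k ≥ 1`:
the minimum of `E` over `n ∈ {0, 1, ..., k}` equals `-ω`, and `E(n) = -ω`
implies `n ≥ 1` (at least one literal is satisfied). -/
theorem clause_energy_min_on_range (ω : ℝ) (hω : 0 < ω) (k : ℕ) (hk : 1 ≤ k)
    (E : ℕ → ℝ) (hE : ∀ n, E n = -(n : ℝ) * ω + (n.choose 2 : ℝ) * ω) :
    IsLeast {y : ℝ | ∃ n ≤ k, y = E n} (-ω) ∧ ∀ n, E n = -ω → 1 ≤ n := by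
  have hlb : ∀ n : ℕ, -ω ≤ E n := by
    intro n
    rw [hE n]
    have := choose_two_ge n
    nlinarith
  constructor
  · constructor
    · exact ⟨1, hk, by rw [hE 1]; norm_num⟩
    · rintro y ⟨n, _, rfl⟩; exact hlb n
  · intro n hn
    by_contra h
    push_neg at h
    interval_cases n
    rw [hE 0] at hn
    norm_num at hn
    linarith
end

section
/- Consider a QUBO over variables x : I → {0,1} given by q(x) = ω·(Σ_{i<j in S} x_i·x_j − Σ_{i in S} x_i) for a finite nonempty set S and ω > 0. Then the minimum of q over all assignments is −ω, and it is attained exactly by assignments setting one or two variables of S to 1. -/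
noncomputable section

/-- Numeric value of a binary variable. -/
def ind (b : Bool) : ℝ := if b then 1 else 0

/-- The clause sub-QUBO `q(x) = ω·Σ_{i<j ∈ S} x_i x_j − ω·Σ_{i ∈ S} x_i`. -/
def clauseQUBO {ι : Type*} [LinearOrder ι] (S : Finset ι) (ω : ℝ) (x : ι → Bool) : ℝ :=
  ω * ∑ i ∈ S, ∑ j ∈ S, (if i < j then ind (x i) * ind (x j) else 0)
    - ω * ∑ i ∈ S, ind (x i)

lemma clauseQUBO_eq {ι : Type*} [LinearOrder ι] (S : Finset ι) (ω : ℝ) (x : ι → Bool) :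
    clauseQUBO S ω x =
      ω * ((((S.filter (fun i => x i = true)).card : ℝ)^2
        - ((S.filter (fun i => x i = true)).card : ℝ)) / 2
        - ((S.filter (fun i => x i = true)).card : ℝ)) := by
  set T := S.filter (fun i => x i = true) with hT
  have h1 : ∑ i ∈ S, ind (x i) = (T.card : ℝ) := by
    rw [hT]
    rw [← Finset.sum_filter_add_sum_filter_not S (fun i => x i = true)]
    have : ∀ i ∈ S.filter (fun i => ¬ x i = true), ind (x i) = 0 := by
      intro i hi
      simp only [Finset.mem_filter] at hi
      simp [ind, hi.2]
    rw [Finset.sum_eq_zero this, add_zero]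
    have : ∀ i ∈ S.filter (fun i => x i = true), ind (x i) = 1 := by
      intro i hi
      simp only [Finset.mem_filter] at hi
      simp [ind, hi.2]
    rw [Finset.sum_congr rfl this, Finset.sum_const, nsmul_eq_mul, mul_one]
  have hTS : T ⊆ S := Finset.filter_subset _ _
  have hmem : ∀ i ∈ T, x i = true := fun i hi => (Finset.mem_filter.mp hi).2
  have h2 : ∑ i ∈ S, ∑ j ∈ S, (if i < j then ind (x i) * ind (x j) else 0)
      = ∑ i ∈ T, ∑ j ∈ T, (if i < j then (1:ℝ) else 0) := by
    rw [← Finset.sum_subset hTS (by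
      intro i _ hi
      have hxi : x i = false := by
        rw [hT] at hi; simp [Finset.mem_filter, ‹i ∈ S›] at hi
        simpa using hi
      apply Finset.sum_eq_zero
      intro j _
      split_ifs <;> simp [ind, hxi])]
    refine Finset.sum_congr rfl fun i hi => ?_
    rw [← Finset.sum_subset hTS (by
      intro j _ hj
      have hxj : x j = false := by
        rw [hT] at hj; simp [Finset.mem_filter, ‹j ∈ S›] at hj
        simpa using hj
      split_ifs <;> simp [ind, hxj])]
    refine Finset.sum_congr rfl fun j hj => ?_
    split_ifs <;> simp [ind, hmem i hi, hmem j hj]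
  have h3 : ∑ i ∈ T, ∑ j ∈ T, (if i < j then (1:ℝ) else 0)
      = (((T.card : ℝ))^2 - (T.card : ℝ)) / 2 := by
    set A := ∑ i ∈ T, ∑ j ∈ T, (if i < j then (1:ℝ) else 0) with hA
    have hswap : A = ∑ i ∈ T, ∑ j ∈ T, (if j < i then (1:ℝ) else 0) := by
      rw [hA, Finset.sum_comm]
    have key : ∀ i j : ι, (if i < j then (1:ℝ) else 0) + (if j < i then 1 else 0)
        = 1 - (if i = j then 1 else 0) := by
      intro i j
      rcases lt_trichotomy i j with h | h | h
      · simp [h, not_lt_of_gt h, h.ne]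
      · simp [h]
      · simp [h, not_lt_of_gt h, h.ne']
    have h2A : A + A = (T.card : ℝ)^2 - (T.card : ℝ) := by
      nth_rewrite 2 [hswap]
      rw [hA, ← Finset.sum_add_distrib]
      simp_rw [← Finset.sum_add_distrib, key]
      simp_rw [Finset.sum_sub_distrib, Finset.sum_const, nsmul_eq_mul, mul_one,
        Finset.sum_ite_eq]
      simp [sq]
    linarith
  rw [clauseQUBO, h1, h2, h3]
  ring

/-- For a nonempty finite set `S` and `ω > 0`, the minimum of the clause sub-QUBO
over all binary assignments is `-ω`, attained exactly by assignments setting one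
or two variables of `S` to 1. -/
theorem clause_qubo_min {ι : Type*} [LinearOrder ι] (S : Finset ι) (hS : S.Nonempty)
    (ω : ℝ) (hω : 0 < ω) :
    IsLeast (Set.range (clauseQUBO S ω)) (-ω) ∧
    ∀ x : ι → Bool, clauseQUBO S ω x = -ω ↔
      ((S.filter (fun i => x i = true)).card = 1 ∨ (S.filter (fun i => x i = true)).card = 2) := by
  have hval : ∀ x : ι → Bool,
      clauseQUBO S ω x = ω * ((((S.filter (fun i => x i = true)).card : ℝ)^2
        - ((S.filter (fun i => x i = true)).card : ℝ)) / 2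
        - ((S.filter (fun i => x i = true)).card : ℝ)) := fun x => clauseQUBO_eq S ω x
  have hlb : ∀ x : ι → Bool, -ω ≤ clauseQUBO S ω x := by
    intro x
    rw [hval x]
    set n := (S.filter (fun i => x i = true)).card
    have hE : (0:ℝ) ≤ (((n:ℝ)^2 - n)/2 - n) + 1 := by
      rcases le_or_gt n 1 with h | h
      · have h1 : (n : ℝ) ≤ 1 := by exact_mod_cast h
        nlinarith [mul_nonneg (by linarith : (0:ℝ) ≤ 1 - (n:ℝ)) (by linarith : (0:ℝ) ≤ 2 - (n:ℝ))]
      · have h1 : (2 : ℝ) ≤ (n : ℝ) := by exact_mod_cast h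
        nlinarith [mul_nonneg (by linarith : (0:ℝ) ≤ (n:ℝ) - 1) (by linarith : (0:ℝ) ≤ (n:ℝ) - 2)]
    nlinarith [mul_nonneg hω.le hE]
  have hiff : ∀ x : ι → Bool, clauseQUBO S ω x = -ω ↔
      ((S.filter (fun i => x i = true)).card = 1 ∨ (S.filter (fun i => x i = true)).card = 2) := by
    intro x
    rw [hval x]
    set n := (S.filter (fun i => x i = true)).card
    constructor
    · intro h
      have h' : ((n:ℝ) - 1) * ((n:ℝ) - 2) = 0 := by
        have hh := mul_left_cancel₀ hω.ne' (by linarith [h] : ω * (((n:ℝ)^2 - n)/2 - n) = ω * (-1))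
        linear_combination 2 * hh
      rcases mul_eq_zero.mp h' with h' | h'
      · left; have : (n : ℝ) = 1 := by linarith
        exact_mod_cast this
      · right; have : (n : ℝ) = 2 := by linarith
        exact_mod_cast this
    · rintro (h | h) <;> rw [h] <;> push_cast <;> ring
  refine ⟨⟨?_, ?_⟩, hiff⟩
  · obtain ⟨a, ha⟩ := hS
    refine ⟨fun i => decide (i = a), ?_⟩
    rw [(hiff _).mpr ?_]
    left
    have : S.filter (fun i => (decide (i = a)) = true) = {a} := by
      ext i
      simp [Finset.mem_filter]
      rintro rfl
      exact ha
    rw [this, Finset.card_singleton]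
  · rintro y ⟨x, rfl⟩
    exact hlb x
end
end

section
/- A Boolean CNF formula f with n clauses, represented as the QUBO of Choi's MIS reduction with δ = ω > 0, is satisfiable if and only if the minimum of the QUBO over all literal-variable assignments equals −n·ω. -/
noncomputable section

/-- Choi's QUBO for a `k`-CNF formula with `n` clauses. The formula `f` gives,
for clause `i` and position `j`, the pair (variable, polarity). The binary
variables `l i j` select literal occurrences. Penalties: `δ` on pairs of
occurrences in the same clause and on conflicting pairs (same variable,
opposite polarity, in different clauses), weight `-ω` on each occurrence. -/
def choiQUBO {V : Type*} [DecidableEq V] (n k : ℕ) (f : Fin n → Fin k → V × Bool)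
    (ω δ : ℝ) (l : Fin n → Fin k → Bool) : ℝ :=
  -ω * ∑ i, ∑ j, ind (l i j)
  + δ * ∑ i, ∑ j, ∑ j', (if j < j' then ind (l i j) * ind (l i j') else 0)
  + δ * ∑ i, ∑ j, ∑ i', ∑ j',
      (if i < i' ∧ (f i j).1 = (f i' j').1 ∧ (f i j).2 ≠ (f i' j').2
       then ind (l i j) * ind (l i' j') else 0)

/-- A truth assignment satisfies the formula: every clause contains a true literal. -/
def Satisfies {V : Type*} {n k : ℕ} (f : Fin n → Fin k → V × Bool) (x : V → Bool) : Prop :=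
  ∀ i, ∃ j, x (f i j).1 = (f i j).2

lemma ind_nonneg (b : Bool) : 0 ≤ ind b := by
  unfold ind; split <;> norm_num

lemma ind_true : ind true = 1 := by simp [ind]

lemma ind_false : ind false = 0 := by simp [ind]

lemma ind_sq (b : Bool) : ind b * ind b = ind b := by
  cases b <;> simp [ind]

lemma key_ineq {k : ℕ} (b : Fin k → Bool) :
    ∑ j, ind (b j) ≤ (∑ j, ∑ j', if j < j' then ind (b j) * ind (b j') else 0) + 1 := by
  set S : ℝ := ∑ j, ind (b j) with hS
  set P : ℝ := ∑ j, ∑ j', if j < j' then ind (b j) * ind (b j') else 0 with hP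
  -- S is a natural number
  have hScard : S = ((Finset.univ.filter fun j => b j = true).card : ℝ) := by
    rw [hS, ← Finset.sum_boole]
    apply Finset.sum_congr rfl
    intro j _
    cases b j <;> simp [ind]
  -- square identity : S^2 = 2P + S
  have hsq : S ^ 2 = 2 * P + S := by
    have expand : ∀ j j' : Fin k, ind (b j) * ind (b j') =
        (if j < j' then ind (b j) * ind (b j') else 0) +
        (if j' < j then ind (b j) * ind (b j') else 0) +
        (if j = j' then ind (b j) * ind (b j') else 0) := by
      intro j j'
      rcases lt_trichotomy j j' with h | h | h
      · simp [h, asymm h, h.ne]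
      · simp [h, lt_irrefl]
      · simp [h, asymm h, h.ne']
    have h1 : S ^ 2 = ∑ j, ∑ j', ind (b j) * ind (b j') := by
      rw [hS, sq, Finset.sum_mul_sum]
    have h2 : ∑ j, ∑ j', (if j' < j then ind (b j) * ind (b j') else 0) = P := by
      rw [Finset.sum_comm, hP]
      apply Finset.sum_congr rfl; intro j _
      apply Finset.sum_congr rfl; intro j' _
      split <;> ring
    have h3 : ∑ j, ∑ j', (if j = j' then ind (b j) * ind (b j') else 0) = S := by
      rw [hS]
      apply Finset.sum_congr rfl; intro j _
      rw [Finset.sum_ite_eq]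
      simp [ind_sq]
    calc S ^ 2 = ∑ j, ∑ j', ind (b j) * ind (b j') := h1
      _ = ∑ j, ∑ j', ((if j < j' then ind (b j) * ind (b j') else 0) +
            (if j' < j then ind (b j) * ind (b j') else 0) +
            (if j = j' then ind (b j) * ind (b j') else 0)) := by
          apply Finset.sum_congr rfl; intro j _
          apply Finset.sum_congr rfl; intro j' _
          exact expand j j'
      _ = P + P + S := by
          simp only [Finset.sum_add_distrib]
          rw [h2, h3, hP]
      _ = 2 * P + S := by ring
  -- (S-1)(S-2) ≥ 0 since S is a natural number
  have hfac : 0 ≤ (S - 1) * (S - 2) := by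
    rw [hScard]
    set m := (Finset.univ.filter fun j => b j = true).card
    rcases Nat.lt_or_ge m 2 with hm | hm
    · interval_cases m <;> norm_num
    · have : (2 : ℝ) ≤ (m : ℝ) := by exact_mod_cast hm
      nlinarith
  nlinarith [hsq, hfac]

lemma exists_true_of_sum_pos {k : ℕ} (b : Fin k → Bool)
    (h : 0 < ∑ j, ind (b j)) : ∃ j, b j = true := by
  by_contra hc
  push_neg at hc
  have : ∑ j : Fin k, ind (b j) = 0 := by
    apply Finset.sum_eq_zero
    intro j _
    have := hc j
    simp only [Bool.not_eq_true] at this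
    rw [this, ind_false]
  linarith

/-- With `δ = ω > 0`, a CNF formula with `n` clauses is satisfiable iff the
minimum of Choi's QUBO over all literal-occurrence assignments is `-n·ω`. -/
theorem choi_loosened_correct {V : Type*} [DecidableEq V] (n k : ℕ)
    (f : Fin n → Fin k → V × Bool) (ω : ℝ) (hω : 0 < ω) :
    (∃ x, Satisfies f x) ↔ IsLeast (Set.range (choiQUBO n k f ω ω)) (-(n : ℝ) * ω) := by
  -- notation for the three sums
  set A : (Fin n → Fin k → Bool) → ℝ := fun l => ∑ i, ∑ j, ind (l i j) with hA
  set B : (Fin n → Fin k → Bool) → ℝ := fun l =>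
    ∑ i, ∑ j, ∑ j', (if j < j' then ind (l i j) * ind (l i j') else 0) with hB
  set C : (Fin n → Fin k → Bool) → ℝ := fun l =>
    ∑ i, ∑ j, ∑ i', ∑ j',
      (if i < i' ∧ (f i j).1 = (f i' j').1 ∧ (f i j).2 ≠ (f i' j').2
       then ind (l i j) * ind (l i' j') else 0) with hC
  have hQ : ∀ l, choiQUBO n k f ω ω l = -ω * A l + ω * B l + ω * C l := by
    intro l; rfl
  -- the conflict sum is nonnegative
  have hCnn : ∀ l, 0 ≤ C l := by
    intro l
    apply Finset.sum_nonneg; intro i _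
    apply Finset.sum_nonneg; intro j _
    apply Finset.sum_nonneg; intro i' _
    apply Finset.sum_nonneg; intro j' _
    split
    · exact mul_nonneg (ind_nonneg _) (ind_nonneg _)
    · exact le_refl 0
  -- per-clause inequality summed up
  have hAB : ∀ l, A l - B l ≤ (n : ℝ) := by
    intro l
    have h1 : A l - B l = ∑ i : Fin n, (∑ j, ind (l i j) -
        ∑ j, ∑ j', (if j < j' then ind (l i j) * ind (l i j') else 0)) := by
      rw [Finset.sum_sub_distrib]
    rw [h1]
    calc ∑ i : Fin n, (∑ j, ind (l i j) -
          ∑ j, ∑ j', (if j < j' then ind (l i j) * ind (l i j') else 0))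
        ≤ ∑ _i : Fin n, (1 : ℝ) := by
          apply Finset.sum_le_sum
          intro i _
          have := key_ineq (l i)
          linarith
      _ = n := by simp
  -- the unconditional lower bound
  have lower : ∀ l, -(n : ℝ) * ω ≤ choiQUBO n k f ω ω l := by
    intro l
    rw [hQ]
    have h1 := mul_le_mul_of_nonneg_left (hAB l) hω.le
    have h2 := mul_nonneg hω.le (hCnn l)
    nlinarith
  constructor
  · -- satisfiable → minimum is -nω
    rintro ⟨x, hx⟩
    choose g hg using hx
    refine ⟨⟨fun i j => decide (j = g i), ?_⟩, fun y ⟨l, hl⟩ => hl ▸ lower l⟩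
    set l : Fin n → Fin k → Bool := fun i j => decide (j = g i) with hldef
    have hlv : ∀ i j, ind (l i j) = if j = g i then 1 else 0 := by
      intro i j
      by_cases h : j = g i <;> simp [hldef, h, ind]
    have hAeq : A l = n := by
      rw [hA]
      have : ∀ i : Fin n, ∑ j, ind (l i j) = 1 := by
        intro i
        simp only [hlv]
        rw [Finset.sum_ite_eq']
        simp
      simp [this]
    have hBeq : B l = 0 := by
      rw [hB]
      apply Finset.sum_eq_zero; intro i _
      apply Finset.sum_eq_zero; intro j _
      apply Finset.sum_eq_zero; intro j' _
      split
      · rename_i hlt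
        rw [hlv, hlv]
        by_cases h : j = g i
        · have : j' ≠ g i := by rintro rfl; exact absurd h (ne_of_lt hlt)
          simp [this]
        · simp [h]
      · rfl
    have hCeq : C l = 0 := by
      rw [hC]
      apply Finset.sum_eq_zero; intro i _
      apply Finset.sum_eq_zero; intro j _
      apply Finset.sum_eq_zero; intro i' _
      apply Finset.sum_eq_zero; intro j' _
      split
      · rename_i hcond
        obtain ⟨-, hv, hp⟩ := hcond
        rw [hlv, hlv]
        by_cases h : j = g i
        · by_cases h' : j' = g i'
          · exfalso
            apply hp
            subst h; subst h'
            rw [← hg i, ← hg i', hv]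
          · simp [h']
        · simp [h]
      · rfl
    rw [hQ, hAeq, hBeq, hCeq]
    ring
  · -- minimum is -nω → satisfiable
    rintro ⟨⟨l, hl⟩, -⟩
    rw [hQ] at hl
    -- derive A l = B l + C l + n
    have hkey : A l = B l + C l + n := by
      have h0 : ω * ((B l + C l + n) - A l) = 0 := by linear_combination hl
      rcases mul_eq_zero.1 h0 with h | h
      · exact absurd h hω.ne'
      · linarith
    -- sum of per-clause slacks equals n + C l
    have hsum : ∑ i : Fin n, (∑ j, ind (l i j) -
        ∑ j, ∑ j', (if j < j' then ind (l i j) * ind (l i j') else 0)) = (n : ℝ) + C l := by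
      rw [Finset.sum_sub_distrib]
      have : A l - B l = (n : ℝ) + C l := by rw [hkey]; ring
      exact this
    have hle1 : ∀ i ∈ Finset.univ, (∑ j, ind (l i j) -
        ∑ j, ∑ j', (if j < j' then ind (l i j) * ind (l i j') else 0)) ≤ (1 : ℝ) := by
      intro i _
      have := key_ineq (l i)
      linarith
    have hsumle : ∑ i : Fin n, (∑ j, ind (l i j) -
        ∑ j, ∑ j', (if j < j' then ind (l i j) * ind (l i j') else 0)) ≤ (n : ℝ) := by
      calc _ ≤ ∑ _i : Fin n, (1 : ℝ) := Finset.sum_le_sum hle1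
        _ = n := by simp
    have hC0 : C l = 0 := le_antisymm (by linarith [hsumle, hsum]) (hCnn l)
    rw [hC0, add_zero] at hsum
    -- each clause slack is exactly 1
    have heach : ∀ i : Fin n, (∑ j, ind (l i j) -
        ∑ j, ∑ j', (if j < j' then ind (l i j) * ind (l i j') else 0)) = (1 : ℝ) := by
      have h := (Finset.sum_eq_sum_iff_of_le hle1).1 (by rw [hsum]; simp)
      intro i; exact h i (Finset.mem_univ i)
    -- each clause has a selected occurrence
    have hsel : ∀ i : Fin n, ∃ j, l i j = true := by
      intro i
      apply exists_true_of_sum_pos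
      have hPnn : 0 ≤ ∑ j, ∑ j', (if j < j' then ind (l i j) * ind (l i j') else 0) := by
        apply Finset.sum_nonneg; intro j _
        apply Finset.sum_nonneg; intro j' _
        split
        · exact mul_nonneg (ind_nonneg _) (ind_nonneg _)
        · exact le_refl 0
      have := heach i
      linarith
    -- no conflicting pair is selected
    have hconf : ∀ i i' j j', i < i' → l i j = true → l i' j' = true →
        (f i j).1 = (f i' j').1 → (f i j).2 ≠ (f i' j').2 → False := by
      intro i i' j j' hii hlj hlj' hv hp
      have hterm : (1 : ℝ) ≤ C l := by
        have e1 : (if i < i' ∧ (f i j).1 = (f i' j').1 ∧ (f i j).2 ≠ (f i' j').2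
            then ind (l i j) * ind (l i' j') else 0) = 1 := by
          rw [if_pos ⟨hii, hv, hp⟩, hlj, hlj', ind_true]
          ring
        have nn4 : ∀ (a b : Fin n) (c d : Fin k), 0 ≤
            (if a < b ∧ (f a c).1 = (f b d).1 ∧ (f a c).2 ≠ (f b d).2
             then ind (l a c) * ind (l b d) else 0) := by
          intro a b c d
          split
          · exact mul_nonneg (ind_nonneg _) (ind_nonneg _)
          · exact le_refl 0
        calc (1 : ℝ) = _ := e1.symm
          _ ≤ ∑ j'', (if i < i' ∧ (f i j).1 = (f i' j'').1 ∧ (f i j).2 ≠ (f i' j'').2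
               then ind (l i j) * ind (l i' j'') else 0) :=
            Finset.single_le_sum (fun a _ => nn4 i i' j a) (Finset.mem_univ j')
          _ ≤ ∑ i'', ∑ j'', (if i < i'' ∧ (f i j).1 = (f i'' j'').1 ∧ (f i j).2 ≠ (f i'' j'').2
               then ind (l i j) * ind (l i'' j'') else 0) :=
            Finset.single_le_sum (fun a _ => Finset.sum_nonneg fun c _ => nn4 i a j c)
              (Finset.mem_univ i')
          _ ≤ ∑ j₀, ∑ i'', ∑ j'', (if i < i'' ∧ (f i j₀).1 = (f i'' j'').1 ∧ (f i j₀).2 ≠ (f i'' j'').2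
               then ind (l i j₀) * ind (l i'' j'') else 0) :=
            Finset.single_le_sum (fun a _ => Finset.sum_nonneg fun b _ =>
              Finset.sum_nonneg fun c _ => nn4 i b a c) (Finset.mem_univ j)
          _ ≤ C l :=
            Finset.single_le_sum (fun a _ => Finset.sum_nonneg fun b _ =>
              Finset.sum_nonneg fun c _ => Finset.sum_nonneg fun d _ => nn4 a c b d)
              (Finset.mem_univ i)
      rw [hC0] at hterm
      linarith
    -- construct a satisfying assignment
    classical
    refine ⟨fun v => decide (∃ i j, l i j = true ∧ (f i j).1 = v ∧ (f i j).2 = true), ?_⟩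
    intro i
    by_cases hpos : ∃ j, l i j = true ∧ (f i j).2 = true
    · obtain ⟨j, hlj, hj2⟩ := hpos
      refine ⟨j, ?_⟩
      rw [hj2]
      simp only [decide_eq_true_eq]
      exact ⟨i, j, hlj, rfl, hj2⟩
    · push_neg at hpos
      obtain ⟨j, hlj⟩ := hsel i
      have hj2 : (f i j).2 = false := by
        rcases Bool.eq_false_or_eq_true (f i j).2 with h | h
        · exact absurd h (hpos j hlj)
        · exact h
      refine ⟨j, ?_⟩
      rw [hj2]
      simp only [decide_eq_false_iff_not]
      rintro ⟨i'', j'', hl'', hv'', ht''⟩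
      by_cases hii : i'' = i
      · subst hii
        exact absurd ht'' (hpos j'' hl'')
      · rcases Ne.lt_or_gt hii with h | h
        · exact hconf i'' i j'' j h hl'' hlj hv'' (by rw [ht'', hj2]; simp)
        · exact hconf i i'' j j'' h hlj hl'' hv''.symm (by rw [ht'', hj2]; simp)
end
end

section
/- In Choi's reduction with δ > ω > 0, any selection of literal occurrences achieving the minimum QUBO value is conflict-free (no two selected literal occurrences are complementary) and contains at most one literal per clause. -/
noncomputable section

lemma prod_ind_le {x x' y y' : Bool} (hx : ind x' ≤ ind x) (hy : ind y' ≤ ind y) :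
    ind x' * ind y' ≤ ind x * ind y :=
  mul_le_mul hx hy (ind_nonneg _) (le_trans (ind_nonneg _) hx)

lemma sum_succ_le {α : Type*} [Fintype α] (g h : α → ℝ) (hle : ∀ x, g x ≤ h x)
    (a : α) (ha : g a + 1 ≤ h a) : (∑ x, g x) + 1 ≤ ∑ x, h x := by
  have h2 : h a - g a ≤ ∑ x, (h x - g x) :=
    Finset.single_le_sum (f := fun x => h x - g x)
      (fun x _ => sub_nonneg.mpr (hle x)) (Finset.mem_univ a)
  rw [Finset.sum_sub_distrib] at h2
  linarith

lemma choiQUBO_eq {V : Type*} [DecidableEq V] (n k : ℕ) (f : Fin n → Fin k → V × Bool)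
    (ω δ : ℝ) (l : Fin n → Fin k → Bool) :
    choiQUBO n k f ω δ l =
    -ω * ∑ p : Fin n × Fin k, ind (l p.1 p.2)
    + δ * ∑ p : Fin n × Fin k × Fin k,
        (if p.2.1 < p.2.2 then ind (l p.1 p.2.1) * ind (l p.1 p.2.2) else 0)
    + δ * ∑ p : (Fin n × Fin k) × (Fin n × Fin k),
        (if p.1.1 < p.2.1 ∧ (f p.1.1 p.1.2).1 = (f p.2.1 p.2.2).1
            ∧ (f p.1.1 p.1.2).2 ≠ (f p.2.1 p.2.2).2
         then ind (l p.1.1 p.1.2) * ind (l p.2.1 p.2.2) else 0) := by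
  simp [choiQUBO, Fintype.sum_prod_type]

lemma flip_lt {V : Type*} [DecidableEq V] (n k : ℕ) (f : Fin n → Fin k → V × Bool)
    (ω δ : ℝ) (hω : 0 < ω) (hδ : ω < δ) (l : Fin n → Fin k → Bool)
    (hmin : ∀ l', choiQUBO n k f ω δ l ≤ choiQUBO n k f ω δ l')
    (i0 : Fin n) (j0 : Fin k) (h0 : l i0 j0 = true)
    (hpen : (∃ j', j0 < j' ∧ l i0 j' = true) ∨
      (∃ i' j', i0 < i' ∧ (f i0 j0).1 = (f i' j').1 ∧ (f i0 j0).2 ≠ (f i' j').2 ∧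
        l i' j' = true)) : False := by
  set l' : Fin n → Fin k → Bool := fun i j => if i = i0 ∧ j = j0 then false else l i j with hl'
  have hval : ∀ i j, ¬(i = i0 ∧ j = j0) → l' i j = l i j := by
    intro i j h
    show (if i = i0 ∧ j = j0 then false else l i j) = l i j
    rw [if_neg h]
  have hval0 : l' i0 j0 = false := by
    show (if i0 = i0 ∧ j0 = j0 then false else l i0 j0) = false
    rw [if_pos ⟨rfl, rfl⟩]
  have hle : ∀ i j, ind (l' i j) ≤ ind (l i j) := by
    intro i j
    by_cases h : i = i0 ∧ j = j0
    · rw [h.1, h.2, hval0]; simpa [ind] using ind_nonneg (l i0 j0)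
    · rw [hval i j h]
  have hS1 : ∑ p : Fin n × Fin k, ind (l' p.1 p.2)
      = (∑ p : Fin n × Fin k, ind (l p.1 p.2)) - 1 := by
    have key : ∑ p : Fin n × Fin k, (ind (l p.1 p.2) - ind (l' p.1 p.2)) = 1 := by
      rw [Fintype.sum_eq_single ((i0, j0) : Fin n × Fin k)]
      · rw [hval0, h0]; simp [ind]
      · intro p hp
        have h : ¬ (p.1 = i0 ∧ p.2 = j0) := by
          intro ⟨h1, h2⟩; exact hp (Prod.ext h1 h2)
        rw [hval p.1 p.2 h]; ring
    rw [Finset.sum_sub_distrib] at key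
    linarith
  set g2 : Fin n × Fin k × Fin k → ℝ := fun p =>
    if p.2.1 < p.2.2 then ind (l' p.1 p.2.1) * ind (l' p.1 p.2.2) else 0 with hg2
  set h2 : Fin n × Fin k × Fin k → ℝ := fun p =>
    if p.2.1 < p.2.2 then ind (l p.1 p.2.1) * ind (l p.1 p.2.2) else 0 with hh2
  set g3 : (Fin n × Fin k) × (Fin n × Fin k) → ℝ := fun p =>
    if p.1.1 < p.2.1 ∧ (f p.1.1 p.1.2).1 = (f p.2.1 p.2.2).1
        ∧ (f p.1.1 p.1.2).2 ≠ (f p.2.1 p.2.2).2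
     then ind (l' p.1.1 p.1.2) * ind (l' p.2.1 p.2.2) else 0 with hg3
  set h3 : (Fin n × Fin k) × (Fin n × Fin k) → ℝ := fun p =>
    if p.1.1 < p.2.1 ∧ (f p.1.1 p.1.2).1 = (f p.2.1 p.2.2).1
        ∧ (f p.1.1 p.1.2).2 ≠ (f p.2.1 p.2.2).2
     then ind (l p.1.1 p.1.2) * ind (l p.2.1 p.2.2) else 0 with hh3
  have hS2le : ∀ p, g2 p ≤ h2 p := by
    intro p; rw [hg2, hh2]; dsimp only; split
    · exact prod_ind_le (hle _ _) (hle _ _)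
    · exact le_refl 0
  have hS3le : ∀ p, g3 p ≤ h3 p := by
    intro p; rw [hg3, hh3]; dsimp only; split
    · exact prod_ind_le (hle _ _) (hle _ _)
    · exact le_refl 0
  have hS2 : ∑ p, g2 p ≤ ∑ p, h2 p := Finset.sum_le_sum (fun p _ => hS2le p)
  have hS3 : ∑ p, g3 p ≤ ∑ p, h3 p := Finset.sum_le_sum (fun p _ => hS3le p)
  -- strict drop in one of the penalty sums
  have hdrop : (∑ p, g2 p) + 1 ≤ ∑ p, h2 p ∨ (∑ p, g3 p) + 1 ≤ ∑ p, h3 p := by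
    rcases hpen with ⟨j', hlt, hj'⟩ | ⟨i', j', hlt, hv, hpol, hj'⟩
    · left
      apply sum_succ_le g2 h2 hS2le (i0, j0, j')
      rw [hg2, hh2]; dsimp only
      rw [if_pos hlt, if_pos hlt, hval0, h0, hj']
      simp [ind]
    · right
      apply sum_succ_le g3 h3 hS3le ((i0, j0), (i', j'))
      rw [hg3, hh3]; dsimp only
      rw [if_pos ⟨hlt, hv, hpol⟩, if_pos ⟨hlt, hv, hpol⟩, hval0, h0, hj']
      simp [ind]
  have hq := hmin l'
  rw [choiQUBO_eq n k f ω δ l, choiQUBO_eq n k f ω δ l', hS1] at hq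
  rw [hg2, hh2, hg3, hh3] at hdrop
  rcases hdrop with hd | hd
  · rw [hg2, hh3] at *
    nlinarith [hS3, hd]
  · nlinarith [hS2, hd]

/-- With `δ > ω > 0`, any minimizer of Choi's QUBO is conflict-free (no two
selected occurrences are of the same variable with opposite polarity) and
selects at most one literal per clause. -/
theorem choi_minimizer_conflict_free {V : Type*} [DecidableEq V] (n k : ℕ)
    (f : Fin n → Fin k → V × Bool) (ω δ : ℝ) (hω : 0 < ω) (hδ : ω < δ)
    (l : Fin n → Fin k → Bool)
    (hmin : ∀ l', choiQUBO n k f ω δ l ≤ choiQUBO n k f ω δ l') :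
    (∀ i j i' j', l i j = true → l i' j' = true →
      (f i j).1 = (f i' j').1 → (f i j).2 ≠ (f i' j').2 → False) ∧
    (∀ i j j', l i j = true → l i j' = true → j = j') := by
  have part2 : ∀ i j j', l i j = true → l i j' = true → j = j' := by
    intro i j j' hj hj'
    by_contra hne
    rcases lt_or_gt_of_ne hne with h | h
    · exact flip_lt n k f ω δ hω hδ l hmin i j hj (Or.inl ⟨j', h, hj'⟩)
    · exact flip_lt n k f ω δ hω hδ l hmin i j' hj' (Or.inl ⟨j, h, hj⟩)
  refine ⟨?_, part2⟩
  intro i j i' j' hj hj' hv hpol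
  rcases lt_trichotomy i i' with h | h | h
  · exact flip_lt n k f ω δ hω hδ l hmin i j hj (Or.inr ⟨i', j', h, hv, hpol, hj'⟩)
  · subst h
    have := part2 i j j' hj hj'
    subst this
    exact hpol rfl
  · exact flip_lt n k f ω δ hω hδ l hmin i' j' hj'
      (Or.inr ⟨i, j, h, hv.symm, fun e => hpol e.symm, hj⟩)
end
end

section
/- The minimum value of Choi's QUBO with δ > ω > 0 equals −ω·M where M is the maximum number of simultaneously satisfiable clauses of f (the MAX-k-SAT value). -/
noncomputable section

/-- Number of clauses of `f` satisfied by the truth assignment `x`. -/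
def satCount {V : Type*} (n k : ℕ) (f : Fin n → Fin k → V × Bool) (x : V → Bool) : ℕ :=
  (Finset.univ.filter fun i : Fin n => ∃ j, x (f i j).1 = (f i j).2).card

/-!
The QUBO value of a selection `l` is `-ω T + δ (A + B)`, where `T` counts the selected
occurrences, `A` the pairs of selected occurrences in a common clause and `B` the selected
conflicting pairs. Selecting the first true literal of each clause satisfied by an optimal
assignment gives `T = M` and `A = B = 0`. Conversely, for any selection, `T` is at most `A`
plus the number of clauses containing a selected occurrence, and the assignment making true
exactly the variables selected positively satisfies all of these clauses but at most `B`: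
an unsatisfied one contains the negative end of a selected conflict. Hence `T ≤ A + B + M`,
and `δ ≥ ω ≥ 0` gives `-ω T + δ (A + B) ≥ -ω M`.
-/

open Finset

theorem Finset.card_le_card_filter_lt_add_one {α : Type*} [LinearOrder α] (s : Finset α) :
    #s ≤ #{q ∈ s ×ˢ s | q.1 < q.2} + 1 := by
  rcases s.eq_empty_or_nonempty with rfl | hs
  · simp
  have hmin := s.min'_mem hs
  have : #(s.erase (s.min' hs)) ≤ #{q ∈ s ×ˢ s | q.1 < q.2} := by
    refine card_le_card_of_injOn (fun j => (s.min' hs, j)) (fun j hj => ?_) ?_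
    · obtain ⟨hne, hjs⟩ := mem_erase.mp hj
      simpa [hmin, hjs] using lt_of_le_of_ne (s.min'_le j hjs) (Ne.symm hne)
    · intro a _ b _ hab
      exact (Prod.ext_iff.mp hab).2
  rw [card_erase_of_mem hmin] at this
  omega

lemma ite_ind_mul_ind (P : Prop) [Decidable P] (a b : Bool) :
    (if P then ind a * ind b else 0) = if P ∧ a ∧ b then 1 else 0 := by
  by_cases P <;> cases a <;> cases b <;> simp [*, ind]

namespace Choi

variable {V : Type*} {n k : ℕ} (f : Fin n → Fin k → V × Bool) (l : Fin n → Fin k → Bool)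

def numSelected : ℕ := ∑ i, #{j | l i j}

def numClausePairs : ℕ := ∑ i, #{q : Fin k × Fin k | q.1 < q.2 ∧ l i q.1 ∧ l i q.2}

def Conflict (p q : Fin n × Fin k) : Prop :=
  p.1 < q.1 ∧ (f p.1 p.2).1 = (f q.1 q.2).1 ∧ (f p.1 p.2).2 ≠ (f q.1 q.2).2

instance [DecidableEq V] : DecidableRel (Conflict f) :=
  fun _ _ => inferInstanceAs (Decidable (_ ∧ _ ∧ _))

def numConflicts [DecidableEq V] : ℕ :=
  #{pq : (Fin n × Fin k) × (Fin n × Fin k) |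
    Conflict f pq.1 pq.2 ∧ l pq.1.1 pq.1.2 ∧ l pq.2.1 pq.2.2}

theorem choiQUBO_eq [DecidableEq V] (ω δ : ℝ) :
    choiQUBO n k f ω δ l =
      -ω * numSelected l + δ * numClausePairs l + δ * numConflicts f l := by
  simp only [choiQUBO, numSelected, numClausePairs, numConflicts, Nat.cast_sum,
    natCast_card_filter, ite_ind_mul_ind, Fintype.sum_prod_type]
  rfl

section Attainment

variable (x : V → Bool)

def firstTrue : Fin n → Fin k → Bool :=
  fun i j => decide (x (f i j).1 = (f i j).2 ∧ ∀ j' < j, x (f i j').1 ≠ (f i j').2)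

variable {f x}

lemma firstTrue_eq_true_iff {i : Fin n} {j : Fin k} :
    firstTrue f x i j ↔ x (f i j).1 = (f i j).2 ∧ ∀ j' < j, x (f i j').1 ≠ (f i j').2 :=
  decide_eq_true_iff

lemma firstTrue_le {i : Fin n} {j j' : Fin k} (hj : firstTrue f x i j)
    (hj' : x (f i j').1 = (f i j').2) : j ≤ j' :=
  not_lt.mp fun h => firstTrue_eq_true_iff.mp hj |>.2 j' h hj'

variable (f x)

lemma numSelected_firstTrue : numSelected (firstTrue f x) = satCount n k f x := by
  rw [numSelected, satCount, card_filter]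
  refine sum_congr rfl fun i _ => ?_
  split_ifs with hsat
  · obtain ⟨j₀, hj₀⟩ := hsat
    obtain ⟨j, hj, hmin⟩ :=
      exists_min_image {j | x (f i j).1 = (f i j).2} id ⟨j₀, by simpa using hj₀⟩
    simp only [mem_filter, mem_univ, true_and, id] at hj hmin
    refine card_eq_one.mpr ⟨j, ext fun j' => ?_⟩
    simp only [mem_filter, mem_univ, true_and, mem_singleton]
    refine ⟨fun hj' => ?_, fun h => firstTrue_eq_true_iff.mpr ⟨h ▸ hj, ?_⟩⟩
    · exact le_antisymm (firstTrue_le hj' hj) (hmin j' (firstTrue_eq_true_iff.mp hj').1)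
    · exact fun j'' hlt h'' => (hmin j'' h'').not_gt (h ▸ hlt)
  · exact card_eq_zero.mpr <| filter_eq_empty_iff.mpr fun j _ hj =>
      hsat ⟨j, (firstTrue_eq_true_iff.mp hj).1⟩

lemma numClausePairs_firstTrue : numClausePairs (firstTrue f x) = 0 := by
  refine sum_eq_zero fun i _ => card_eq_zero.mpr <| filter_eq_empty_iff.mpr ?_
  rintro ⟨j, j'⟩ - ⟨hlt, hj, hj'⟩
  exact (firstTrue_le hj' (firstTrue_eq_true_iff.mp hj).1).not_gt hlt

lemma numConflicts_firstTrue [DecidableEq V] : numConflicts f (firstTrue f x) = 0 := by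
  refine card_eq_zero.mpr <| filter_eq_empty_iff.mpr ?_
  rintro ⟨⟨i, j⟩, ⟨i', j'⟩⟩ - ⟨⟨-, hvar, hpol⟩, hj, hj'⟩
  have h := (firstTrue_eq_true_iff.mp hj).1
  have h' := (firstTrue_eq_true_iff.mp hj').1
  simp only at hvar hpol h h'
  exact hpol (h.symm.trans (hvar ▸ h'))

end Attainment

section LowerBound

lemma numSelected_le_add_card_active :
    numSelected l ≤ numClausePairs l + #{i | ∃ j, l i j} := by
  rw [numSelected, numClausePairs, card_filter, ← sum_add_distrib]
  refine sum_le_sum fun i _ => ?_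
  split_ifs with h
  · set S : Finset (Fin k) := {j | l i j}
    have hpairs : #{q : Fin k × Fin k | q.1 < q.2 ∧ l i q.1 ∧ l i q.2} =
        #{q ∈ S ×ˢ S | q.1 < q.2} := by
      congr 1; ext q; simp [S, and_comm]
    exact hpairs ▸ card_le_card_filter_lt_add_one S
  · push Not at h
    simp [h]

def assignmentOfSelection [DecidableEq V] : V → Bool :=
  fun v => decide (∃ i j, l i j ∧ f i j = (v, true))

/-- A selected literal of an unsatisfied clause is negative, and its variable is made true by a
selected positive occurrence in another clause; each such clause is thus the clause of the
negative end of some selected conflict. -/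
lemma card_active_unsat_le_numConflicts [DecidableEq V] :
    #{i | (∃ j, l i j) ∧ ¬∃ j, assignmentOfSelection f l (f i j).1 = (f i j).2} ≤
      numConflicts f l := by
  set x := assignmentOfSelection f l
  refine card_le_card_of_surjOn
    (fun pq => if (f pq.1.1 pq.1.2).2 then pq.2.1 else pq.1.1) fun i hi => ?_
  simp only [coe_filter, mem_univ, true_and, Set.mem_ofPred_eq, not_exists] at hi
  obtain ⟨⟨j, hj⟩, hunsat⟩ := hi
  have hx (v : V) : x v = true ↔ ∃ i j, l i j ∧ f i j = (v, true) := decide_eq_true_iff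
  have hneg : (f i j).2 = false := by
    by_contra hpos
    rw [Bool.not_eq_false] at hpos
    exact hunsat j (by rw [hpos]; exact (hx _).mpr ⟨i, j, hj, Prod.ext rfl hpos⟩)
  obtain ⟨i', j', hj', hfij'⟩ := (hx (f i j).1).mp (by simpa [hneg] using hunsat j)
  have hne : i ≠ i' := by
    rintro rfl
    exact hunsat j' (by rw [hfij']; exact (hx _).mpr ⟨i, j', hj', hfij'⟩)
  rcases hne.lt_or_gt with hlt | hgt
  · refine ⟨((i, j), (i', j')), ?_, by simp [hneg]⟩
    rw [mem_coe, mem_filter]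
    simp [Conflict, hlt, hfij', hneg, hj, hj']
  · refine ⟨((i', j'), (i, j)), ?_, by simp [hfij']⟩
    rw [mem_coe, mem_filter]
    simp [Conflict, hgt, hfij', hneg, hj, hj']

lemma numSelected_le_add_satCount [DecidableEq V] :
    numSelected l ≤
      numClausePairs l + numConflicts f l + satCount n k f (assignmentOfSelection f l) := by
  have hpairs := numSelected_le_add_card_active l
  have hconflicts := card_active_unsat_le_numConflicts f l
  set x := assignmentOfSelection f l
  have hsplit : #{i | ∃ j, l i j} ≤
      satCount n k f x + #{i | (∃ j, l i j) ∧ ¬∃ j, x (f i j).1 = (f i j).2} :=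
    (card_le_card fun i => by simp only [mem_filter, mem_union, mem_univ, true_and]; tauto).trans
      (card_union_le _ _)
  omega

end LowerBound

end Choi

open Choi

/-- With `δ > ω > 0`, the minimum value of Choi's QUBO equals `-ω·M`, where `M`
is the maximum number of simultaneously satisfiable clauses (MAX-k-SAT value). -/
theorem choi_maxsat {V : Type*} [DecidableEq V] (n k : ℕ)
    (f : Fin n → Fin k → V × Bool) (ω δ : ℝ) (hω : 0 < ω) (hδ : ω < δ) (M : ℕ)
    (hM : IsGreatest {m : ℕ | ∃ x : V → Bool, satCount n k f x = m} M) :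
    IsLeast (Set.range (choiQUBO n k f ω δ)) (-ω * (M : ℝ)) := by
  obtain ⟨⟨x, rfl⟩, hmax⟩ := hM
  refine ⟨⟨firstTrue f x, ?_⟩, ?_⟩
  · simp [choiQUBO_eq, numSelected_firstTrue, numClausePairs_firstTrue, numConflicts_firstTrue]
  rintro _ ⟨l, rfl⟩
  have hbound : (numSelected l : ℝ) ≤
      numClausePairs l + numConflicts f l + satCount n k f x := by
    exact_mod_cast (numSelected_le_add_satCount f l).trans (by gcongr; exact hmax ⟨_, rfl⟩)
  rw [choiQUBO_eq]
  nlinarith [mul_le_mul_of_nonneg_left hbound hω.le, (numClausePairs l).cast_nonneg (α := ℝ),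
    (numConflicts f l).cast_nonneg (α := ℝ)]
end
end

section
/- In the backbone reduction, for each clause sub-QUBO, once the variable backbone values x_j are fixed consistently, the contribution equals E(n) = −n·ω + (n choose 2)·ω where n is the number of literals of the clause satisfied by the truth assignment x; hence the per-clause minimum is −ω, attained iff the clause is satisfied. -/
noncomputable section

/-- The backbone-reduction QUBO for a `k`-CNF formula with `n` clauses given by
`f` (clause `i`, position `j` ↦ (variable, polarity)), over literal-occurrence
variables `l` and backbone variables `x`:
`q(l,x) = ω·(Σ same-clause pairs l·l' + Σ positive occurrences (−l·x) +
Σ negative occurrences (−l + l·x))`. -/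
def backboneQUBO {V : Type*} (n k : ℕ) (f : Fin n → Fin k → V × Bool) (ω : ℝ)
    (l : Fin n → Fin k → Bool) (x : V → Bool) : ℝ :=
  ω * ((∑ i, ∑ j, ∑ j', if j < j' then ind (l i j) * ind (l i j') else 0)
    + (∑ i, ∑ j, if (f i j).2 = true then -(ind (l i j) * ind (x (f i j).1)) else 0)
    + (∑ i, ∑ j, if (f i j).2 = false
        then -ind (l i j) + ind (l i j) * ind (x (f i j).1) else 0))

/-- Auxiliary: the single-clause backbone QUBO in closed form, in terms of the
number `s` of selected literals and the number `t` of selected satisfied literals. -/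
lemma bb_key {V : Type*} (k : ℕ) (g : Fin 1 → Fin k → V × Bool) (ω : ℝ) (x : V → Bool)
    (l : Fin 1 → Fin k → Bool) :
    backboneQUBO 1 k g ω l x
      = ω * (((((Finset.univ.filter fun j : Fin k => l 0 j = true).card : ℝ))^2
            - ((Finset.univ.filter fun j : Fin k => l 0 j = true).card : ℝ))/2
          - ((Finset.univ.filter fun j : Fin k =>
              l 0 j = true ∧ x (g 0 j).1 = (g 0 j).2).card : ℝ)) := by
  set a : Fin k → ℝ := fun j => ind (l 0 j) with ha_def
  have haj : ∀ j, ind (l 0 j) = a j := fun _ => rfl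
  have ha : ∀ j, a j * a j = a j := by
    intro j; cases h : l 0 j <;> simp [ha_def, ind, h]
  have hs : ∑ j, a j = ((Finset.univ.filter fun j : Fin k => l 0 j = true).card : ℝ) := by
    rw [← Finset.sum_boole]
    refine Finset.sum_congr rfl fun j _ => ?_
    cases h : l 0 j <;> simp [ha_def, ind, h]
  have e1 : (∑ j, ∑ j', if j' < j then a j * a j' else 0)
      = (∑ j, ∑ j', if j < j' then a j * a j' else 0) := by
    rw [Finset.sum_comm]
    refine Finset.sum_congr rfl fun j _ => Finset.sum_congr rfl fun j' _ => ?_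
    split_ifs <;> [rw [mul_comm]; rfl]
  have expand : ∑ j, ∑ j', a j * a j'
      = (∑ j, ∑ j', if j < j' then a j * a j' else 0)
        + (∑ j, ∑ j', if j < j' then a j * a j' else 0) + ∑ j, a j := by
    have hpt : ∀ j j' : Fin k, a j * a j'
        = (if j < j' then a j * a j' else 0) + (if j' < j then a j * a j' else 0)
          + (if j = j' then a j else 0) := by
      intro j j'
      rcases lt_trichotomy j j' with h | h | h
      · simp [h, h.ne, asymm h]
      · subst h; rw [if_neg (lt_irrefl _), if_pos rfl, ha]; ring
      · simp [h, h.ne', asymm h]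
    rw [Finset.sum_congr rfl fun j _ => Finset.sum_congr rfl fun j' _ => hpt j j']
    simp_rw [Finset.sum_add_distrib]
    rw [e1]
    congr 1
    simp
  have hP : (∑ j, ∑ j', if j < j' then a j * a j' else 0)
      = ((∑ j, a j)^2 - ∑ j, a j) / 2 := by
    have hsq : (∑ j, a j)^2
        = 2 * (∑ j, ∑ j', if j < j' then a j * a j' else 0) + ∑ j, a j := by
      rw [sq, Finset.sum_mul_sum, expand]; ring
    linarith
  have hT : (∑ j, if (g 0 j).2 = true then -(ind (l 0 j) * ind (x (g 0 j).1)) else 0)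
      + (∑ j, if (g 0 j).2 = false then -ind (l 0 j) + ind (l 0 j) * ind (x (g 0 j).1) else 0)
      = -((Finset.univ.filter fun j : Fin k =>
            l 0 j = true ∧ x (g 0 j).1 = (g 0 j).2).card : ℝ) := by
    rw [← Finset.sum_add_distrib, ← Finset.sum_boole, ← Finset.sum_neg_distrib]
    refine Finset.sum_congr rfl fun j _ => ?_
    cases h1 : (g 0 j).2 <;> cases h2 : x (g 0 j).1 <;> cases h3 : l 0 j <;>
      simp [ind, h1, h2, h3]
  unfold backboneQUBO
  rw [Fin.sum_univ_one, Fin.sum_univ_one, Fin.sum_univ_one]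
  rw [add_assoc, hT]
  simp_rw [haj]
  rw [hP, hs]
  ring

lemma bb_nat_quad (n : ℕ) : 0 ≤ ((n : ℝ) - 1) * ((n : ℝ) - 2) := by
  rcases n with _ | _ | m
  · norm_num
  · norm_num
  · push_cast
    nlinarith [Nat.cast_nonneg (α := ℝ) m]

/-- For a single clause (`n = 1`) of the backbone reduction with the backbone
values `x` fixed: selecting exactly the satisfied literals yields the energy
`E(m) = -m·ω + (m choose 2)·ω`, where `m` is the number of literals of the
clause satisfied by `x`; and the minimum over all selections is `-ω` iff the
clause is satisfied. -/
theorem backbone_clause_energy {V : Type*} (k : ℕ) (g : Fin 1 → Fin k → V × Bool)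
    (ω : ℝ) (hω : 0 < ω) (x : V → Bool) :
    (∀ m : ℕ, m = (Finset.univ.filter fun j : Fin k => x (g 0 j).1 = (g 0 j).2).card →
      backboneQUBO 1 k g ω (fun _ j => decide (x (g 0 j).1 = (g 0 j).2)) x
        = -(m : ℝ) * ω + (m.choose 2 : ℝ) * ω) ∧
    (IsLeast (Set.range fun l => backboneQUBO 1 k g ω l x) (-ω) ↔
      ∃ j, x (g 0 j).1 = (g 0 j).2) := by
  constructor
  · intro m hm
    rw [bb_key]
    have e1 : (Finset.univ.filter fun j : Fin k =>
          (fun (_ : Fin 1) j => decide (x (g 0 j).1 = (g 0 j).2)) 0 j = true)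
        = Finset.univ.filter fun j : Fin k => x (g 0 j).1 = (g 0 j).2 := by
      ext j; simp
    have e2 : (Finset.univ.filter fun j : Fin k =>
          (fun (_ : Fin 1) j => decide (x (g 0 j).1 = (g 0 j).2)) 0 j = true
            ∧ x (g 0 j).1 = (g 0 j).2)
        = Finset.univ.filter fun j : Fin k => x (g 0 j).1 = (g 0 j).2 := by
      ext j; simp
    rw [e1, e2, ← hm, Nat.cast_choose_two]
    ring
  · constructor
    · rintro ⟨⟨l, hl⟩, -⟩
      by_contra hno
      push_neg at hno
      have ht0 : (Finset.univ.filter fun j : Fin k =>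
          l 0 j = true ∧ x (g 0 j).1 = (g 0 j).2) = ∅ := by
        ext j; simp [hno j]
      beta_reduce at hl
      rw [bb_key, ht0] at hl
      set ns := (Finset.univ.filter fun j : Fin k => l 0 j = true).card with hns
      simp only [Finset.card_empty, Nat.cast_zero, sub_zero] at hl
      have hss : (ns : ℝ) ≤ (ns : ℝ)^2 := by
        rcases Nat.eq_zero_or_pos ns with h | h
        · simp [h]
        · have h1 : (1 : ℝ) ≤ (ns : ℝ) := by exact_mod_cast h
          nlinarith
      nlinarith
    · rintro ⟨j₀, hj₀⟩
      constructor
      · refine ⟨fun _ j => decide (j = j₀), ?_⟩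
        show backboneQUBO 1 k g ω (fun _ j => decide (j = j₀)) x = -ω
        rw [bb_key]
        have e1 : (Finset.univ.filter fun j : Fin k =>
            (fun (_ : Fin 1) j => decide (j = j₀)) 0 j = true) = {j₀} := by
          ext j; simp
        have e2 : (Finset.univ.filter fun j : Fin k =>
            (fun (_ : Fin 1) j => decide (j = j₀)) 0 j = true
              ∧ x (g 0 j).1 = (g 0 j).2) = {j₀} := by
          ext j
          simp only [Finset.mem_filter, Finset.mem_univ, true_and,
            Finset.mem_singleton, decide_eq_true_eq]
          constructor
          · rintro ⟨h, -⟩; exact h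
          · rintro rfl; exact ⟨rfl, hj₀⟩
        rw [e1, e2]
        norm_num
      · rintro y ⟨l, rfl⟩
        beta_reduce
        rw [bb_key]
        set ns := (Finset.univ.filter fun j : Fin k => l 0 j = true).card with hns
        set nt := (Finset.univ.filter fun j : Fin k =>
            l 0 j = true ∧ x (g 0 j).1 = (g 0 j).2).card with hnt
        have hts : nt ≤ ns := by
          apply Finset.card_le_card
          intro j hj
          simp only [Finset.mem_filter] at hj ⊢
          exact ⟨hj.1, hj.2.1⟩
        have hts' : (nt : ℝ) ≤ (ns : ℝ) := by exact_mod_cast hts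
        have hq := bb_nat_quad ns
        nlinarith [mul_nonneg hω.le hq, mul_nonneg hω.le (sub_nonneg.mpr hts')]
end
end

section
/- A k-CNF formula f with n clauses is satisfiable if and only if the minimum of the backbone-reduction QUBO over all assignments of literal-occurrence variables and backbone variables equals −n·ω. -/
noncomputable section

/-- pair sum of a clause's literal-occurrence variables -/
def pairSum {k : ℕ} (a : Fin k → Bool) : ℝ :=
  ∑ j, ∑ j', if j < j' then ind (a j) * ind (a j') else 0

lemma ind_le_one (b : Bool) : ind b ≤ 1 := by cases b <;> simp [ind]

lemma term_eq (p a xv : Bool) :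
    ((if p = true then -(ind a * ind xv) else 0)
      + (if p = false then -ind a + ind a * ind xv else 0))
    = -(ind a * ind (xv == p)) := by
  cases p <;> cases a <;> cases xv <;> simp [ind]

lemma pairSum_nonneg {k : ℕ} (a : Fin k → Bool) : 0 ≤ pairSum a := by
  refine Finset.sum_nonneg fun j _ => Finset.sum_nonneg fun j' _ => ?_
  split
  · exact mul_nonneg (ind_nonneg _) (ind_nonneg _)
  · exact le_refl 0
  
lemma sum_ind_eq {k : ℕ} (a : Fin k → Bool) :
    ∑ j, ind (a j) = ((Finset.univ.filter fun j => a j = true).card : ℝ) := by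
  simp only [ind]
  exact Finset.sum_boole _ _

lemma two_pairSum {k : ℕ} (a : Fin k → Bool) :
    2 * pairSum a = (∑ j, ind (a j))^2 - ∑ j, ind (a j) := by
  have h : (∑ j, ind (a j))^2 = ∑ j, ∑ j', ind (a j) * ind (a j') := by
    rw [sq, Finset.sum_mul_sum]
  have split : ∀ j j' : Fin k, ind (a j) * ind (a j')
      = (if j < j' then ind (a j) * ind (a j') else 0)
        + (if j' < j then ind (a j) * ind (a j') else 0)
        + (if j = j' then ind (a j) * ind (a j') else 0) := by
    intro j j'
    rcases lt_trichotomy j j' with hlt | heq | hgt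
    · simp [hlt, hlt.ne, not_lt_of_gt hlt]
    · simp [heq]
    · simp [hgt, (hgt.ne).symm, not_lt_of_gt hgt]
  have hsum : ∑ j, ∑ j', ind (a j) * ind (a j')
      = pairSum a + pairSum a + ∑ j, ind (a j) := by
    calc ∑ j, ∑ j', ind (a j) * ind (a j')
        = (∑ j, ∑ j', if j < j' then ind (a j) * ind (a j') else 0)
          + (∑ j, ∑ j', if j' < j then ind (a j) * ind (a j') else 0)
          + (∑ j, ∑ j', if j = j' then ind (a j) * ind (a j') else 0) := by
          rw [← Finset.sum_add_distrib, ← Finset.sum_add_distrib]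
          refine Finset.sum_congr rfl fun j _ => ?_
          rw [← Finset.sum_add_distrib, ← Finset.sum_add_distrib]
          exact Finset.sum_congr rfl fun j' _ => split j j'
      _ = pairSum a + pairSum a + ∑ j, ind (a j) := by
          congr 1
          · congr 1
            rw [Finset.sum_comm]
            refine Finset.sum_congr rfl fun j _ => Finset.sum_congr rfl fun j' _ => ?_
            rw [mul_comm]
          · refine Finset.sum_congr rfl fun j _ => ?_
            rw [Finset.sum_ite_eq Finset.univ j (fun j' => ind (a j) * ind (a j'))]
            simp [ind_sq]
  rw [h, hsum]; ring

lemma satsum_le {k : ℕ} (a b : Fin k → Bool) :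
    ∑ j, ind (a j) * ind (b j) ≤ ∑ j, ind (a j) := by
  refine Finset.sum_le_sum fun j _ => ?_
  calc ind (a j) * ind (b j) ≤ ind (a j) * 1 :=
        mul_le_mul_of_nonneg_left (ind_le_one _) (ind_nonneg _)
    _ = ind (a j) := mul_one _

lemma satsum_nonneg {k : ℕ} (a b : Fin k → Bool) :
    0 ≤ ∑ j, ind (a j) * ind (b j) :=
  Finset.sum_nonneg fun j _ => mul_nonneg (ind_nonneg _) (ind_nonneg _)

lemma clause_lb {k : ℕ} (a b : Fin k → Bool) :
    -1 ≤ pairSum a - ∑ j, ind (a j) * ind (b j) := by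
  set m := (Finset.univ.filter fun j => a j = true).card with hm
  have hS : ∑ j, ind (a j) = (m : ℝ) := sum_ind_eq a
  have h2 : 2 * pairSum a = (m : ℝ)^2 - m := by rw [two_pairSum, hS]
  have hs : ∑ j, ind (a j) * ind (b j) ≤ (m : ℝ) := hS ▸ satsum_le a b
  have hnn := satsum_nonneg a b
  rcases Nat.lt_or_ge m 2 with hlt | hge
  · interval_cases m <;> push_cast at h2 hs <;> nlinarith
  · have : (2 : ℝ) ≤ m := by exact_mod_cast hge
    nlinarith

lemma clause_sat {k : ℕ} (a b : Fin k → Bool)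
    (h : pairSum a - ∑ j, ind (a j) * ind (b j) = -1) : ∃ j, b j = true := by
  by_contra hb
  push_neg at hb
  have hs0 : ∑ j, ind (a j) * ind (b j) = 0 := by
    refine Finset.sum_eq_zero fun j _ => ?_
    have : b j = false := by
      cases hj : b j
      · rfl
      · exact absurd hj (hb j)
    rw [this]; simp [ind]
  have := pairSum_nonneg a
  rw [hs0] at h
  linarith

lemma clause_min {k : ℕ} (b : Fin k → Bool) (j0 : Fin k) (hb : b j0 = true) :
    pairSum (fun j => j == j0) - ∑ j, ind ((j == j0 : Bool)) * ind (b j) = -1 := by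
  have hp : pairSum (fun j => j == j0) = 0 := by
    refine Finset.sum_eq_zero fun j _ => Finset.sum_eq_zero fun j' _ => ?_
    by_cases hlt : j < j'
    · simp only [if_pos hlt]
      by_cases hj : j = j0
      · have : j' ≠ j0 := fun h => by rw [h, ← hj] at hlt; exact lt_irrefl j hlt
        simp [ind, this]
      · simp [ind, hj]
    · simp [hlt]
  have hs : ∑ j, ind ((j == j0 : Bool)) * ind (b j) = 1 := by
    have he : ∀ j : Fin k, ind ((j == j0 : Bool)) * ind (b j)
        = if j = j0 then ind (b j) else 0 := by
      intro j
      by_cases hj : j = j0 <;> simp [ind, hj]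
    rw [Finset.sum_congr rfl fun j _ => he j, Finset.sum_ite_eq' Finset.univ j0]
    simp [ind, hb]
  rw [hp, hs]; norm_num

/-- A `k`-CNF formula with `n` clauses is satisfiable iff the minimum of the
backbone-reduction QUBO over all assignments of literal-occurrence variables
and backbone variables equals `-n·ω`. -/
theorem backbone_correct {V : Type*} (n k : ℕ) (f : Fin n → Fin k → V × Bool)
    (ω : ℝ) (hω : 0 < ω) :
    (∃ x, Satisfies f x) ↔
      IsLeast
        (Set.range fun p : (Fin n → Fin k → Bool) × (V → Bool) =>
          backboneQUBO n k f ω p.1 p.2)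
        (-(n : ℝ) * ω) := by
  have hQ : ∀ (l : Fin n → Fin k → Bool) (x : V → Bool),
      backboneQUBO n k f ω l x
        = ω * ∑ i, (pairSum (l i)
            - ∑ j, ind (l i j) * ind (x (f i j).1 == (f i j).2)) := by
    intro l x
    unfold backboneQUBO
    congr 1
    rw [← Finset.sum_add_distrib, ← Finset.sum_add_distrib]
    refine Finset.sum_congr rfl fun i _ => ?_
    have hBC : ((∑ j, if (f i j).2 = true then -(ind (l i j) * ind (x (f i j).1)) else 0)
        + ∑ j, if (f i j).2 = false
            then -ind (l i j) + ind (l i j) * ind (x (f i j).1) else 0)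
        = -(∑ j, ind (l i j) * ind (x (f i j).1 == (f i j).2)) := by
      rw [← Finset.sum_add_distrib, ← Finset.sum_neg_distrib]
      exact Finset.sum_congr rfl fun j _ => term_eq (f i j).2 (l i j) (x (f i j).1)
    rw [add_assoc, hBC, sub_eq_add_neg]
    rfl
  -- lower bound holds for every point
  have hlb : ∀ p : (Fin n → Fin k → Bool) × (V → Bool),
      -(n : ℝ) * ω ≤ backboneQUBO n k f ω p.1 p.2 := by
    rintro ⟨l, x⟩
    rw [hQ]
    have : (-(n : ℝ)) ≤ ∑ i : Fin n, (pairSum (l i)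
        - ∑ j, ind (l i j) * ind (x (f i j).1 == (f i j).2)) := by
      calc (-(n : ℝ)) = ∑ _i : Fin n, (-1 : ℝ) := by simp
        _ ≤ _ := Finset.sum_le_sum fun i _ => clause_lb (l i) _
    calc -(n : ℝ) * ω = ω * (-(n : ℝ)) := by ring
      _ ≤ ω * _ := mul_le_mul_of_nonneg_left this hω.le
  constructor
  · rintro ⟨x, hx⟩
    refine ⟨?_, fun y ⟨p, hp⟩ => hp ▸ hlb p⟩
    refine ⟨⟨fun i j => j == (hx i).choose, x⟩, ?_⟩
    show backboneQUBO n k f ω (fun i j => j == (hx i).choose) x = -(n : ℝ) * ω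
    rw [hQ]
    have : ∀ i : Fin n, pairSum (fun j => j == (hx i).choose)
        - ∑ j, ind ((j == (hx i).choose : Bool)) * ind (x (f i j).1 == (f i j).2) = -1 := by
      intro i
      apply clause_min
      exact beq_iff_eq.mpr (hx i).choose_spec
    rw [Finset.sum_congr rfl fun i _ => this i]
    simp
    ring
  · rintro ⟨⟨⟨l, x⟩, hp⟩, _⟩
    change backboneQUBO n k f ω l x = -(n : ℝ) * ω at hp
    rw [hQ] at hp
    have hsum : ∑ i, (pairSum (l i)
        - ∑ j, ind (l i j) * ind (x (f i j).1 == (f i j).2)) = ∑ _i : Fin n, (-1 : ℝ) := by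
      have : ω * ∑ i, (pairSum (l i)
          - ∑ j, ind (l i j) * ind (x (f i j).1 == (f i j).2)) = ω * (-(n : ℝ)) := by
        rw [hp]; ring
      have h2 := mul_left_cancel₀ hω.ne' this
      rw [h2]; simp
    have heach := (Finset.sum_eq_sum_iff_of_le
      (fun i _ => clause_lb (l i) (fun j => (x (f i j).1 == (f i j).2)))).mp hsum.symm
    refine ⟨x, fun i => ?_⟩
    obtain ⟨j, hj⟩ := clause_sat (l i) _ (heach i (Finset.mem_univ i)).symm
    exact ⟨j, beq_iff_eq.mp hj⟩
end
end

section
/- Let q be Choi's QUBO with δ > ω > 0 for a formula f with n clauses. Then min q ≥ −n·ω, with equality iff f is satisfiable. -/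
noncomputable section

lemma clause_sum {k : ℕ} (g : Fin k → Bool) :
    ∃ m : ℕ, (∑ j, ind (g j)) = m ∧
      (2 * ∑ j, ∑ j', (if j < j' then ind (g j) * ind (g j') else 0)
        = (∑ j, ind (g j))^2 - ∑ j, ind (g j)) ∧
      (Finset.univ.filter (fun j => g j = true)).card = m := by
  classical
  refine ⟨(Finset.univ.filter (fun j => g j = true)).card, ?_, ?_, rfl⟩
  · rw [← Finset.sum_boole]
    refine Finset.sum_congr rfl fun j _ => ?_
    cases hj : g j <;> simp [ind, hj]
  · set T := ∑ j, ind (g j) with hT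
    have hsq : T ^ 2 = ∑ j, ∑ j', ind (g j) * ind (g j') := by
      rw [sq, Finset.sum_mul_sum]
    have hdec : ∀ j j' : Fin k, ind (g j) * ind (g j') =
        (if j < j' then ind (g j) * ind (g j') else 0)
        + (if j' < j then ind (g j) * ind (g j') else 0)
        + (if j = j' then ind (g j) * ind (g j') else 0) := by
      intro j j'
      rcases lt_trichotomy j j' with h | h | h
      · simp [h, lt_asymm h, h.ne]
      · simp [h, lt_irrefl]
      · simp [h, lt_asymm h, h.ne']
    have hsplit : T ^ 2 =
        (∑ j, ∑ j', (if j < j' then ind (g j) * ind (g j') else 0))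
        + (∑ j, ∑ j', (if j' < j then ind (g j) * ind (g j') else 0))
        + (∑ j, ∑ j', (if j = j' then ind (g j) * ind (g j') else 0)) := by
      rw [hsq]
      simp only [← Finset.sum_add_distrib]
      exact Finset.sum_congr rfl fun j _ => Finset.sum_congr rfl fun j' _ => hdec j j'
    have h2 : (∑ j, ∑ j', (if j' < j then ind (g j) * ind (g j') else 0))
        = ∑ j, ∑ j', (if j < j' then ind (g j) * ind (g j') else 0) := by
      rw [Finset.sum_comm]
      exact Finset.sum_congr rfl fun j _ => Finset.sum_congr rfl fun j' _ => by
        rcases lt_or_ge j j' with h | h <;> simp [h, mul_comm, not_lt.2, le_of_lt]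
    have h3 : (∑ j, ∑ j', (if j = j' then ind (g j) * ind (g j') else 0)) = T := by
      rw [hT]
      refine Finset.sum_congr rfl fun j _ => ?_
      simp [Finset.sum_ite_eq, ind_sq]
    rw [hsplit, h2, h3]; ring

lemma key_ineq_s19 (ω δ : ℝ) (hω : 0 < ω) (hδ : ω < δ) (m : ℕ) :
    -ω ≤ -ω * m + δ * ((m:ℝ)^2 - m) / 2 ∧
      ((-ω * m + δ * ((m:ℝ)^2 - m) / 2 = -ω) ↔ m = 1) := by
  match m with
  | 0 => constructor
         · simp; linarith
         · simp; intro h; linarith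
  | 1 => constructor
         · norm_num
         · norm_num
  | (s+2) =>
    have hs : (0:ℝ) ≤ s := Nat.cast_nonneg s
    have : -ω < -ω * (s+2:ℕ) + δ * (((s+2:ℕ):ℝ)^2 - (s+2:ℕ)) / 2 := by
      push_cast
      nlinarith [mul_nonneg hs (sub_pos.2 hδ).le, mul_nonneg (mul_nonneg hs hs) (sub_pos.2 hδ).le]
    constructor
    · exact this.le
    · constructor
      · intro h; rw [h] at this; exact absurd this (lt_irrefl _)
      · intro h; omega

lemma quad_zero {n k : ℕ} (g : Fin n → Fin k → Fin n → Fin k → ℝ)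
    (hg : ∀ i j i' j', 0 ≤ g i j i' j')
    (h : ∑ i, ∑ j, ∑ i', ∑ j', g i j i' j' = 0) :
    ∀ i j i' j', g i j i' j' = 0 := by
  intro i j i' j'
  have h1 := (Finset.sum_eq_zero_iff_of_nonneg (fun i _ =>
    Finset.sum_nonneg fun j _ => Finset.sum_nonneg fun i' _ =>
      Finset.sum_nonneg fun j' _ => hg i j i' j')).1 h i (Finset.mem_univ i)
  have h2 := (Finset.sum_eq_zero_iff_of_nonneg (fun j _ =>
    Finset.sum_nonneg fun i' _ => Finset.sum_nonneg fun j' _ => hg i j i' j')).1 h1 j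
      (Finset.mem_univ j)
  have h3 := (Finset.sum_eq_zero_iff_of_nonneg (fun i' _ =>
    Finset.sum_nonneg fun j' _ => hg i j i' j')).1 h2 i' (Finset.mem_univ i')
  exact (Finset.sum_eq_zero_iff_of_nonneg (fun j' _ => hg i j i' j')).1 h3 j'
    (Finset.mem_univ j')

lemma ite_ind_nonneg (c : Prop) [Decidable c] (a b : Bool) :
    0 ≤ if c then ind a * ind b else 0 := by
  split
  · exact mul_nonneg (ind_nonneg a) (ind_nonneg b)
  · exact le_refl 0

lemma choi_decomp {V : Type*} [DecidableEq V] (n k : ℕ) (f : Fin n → Fin k → V × Bool)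
    (ω δ : ℝ) (l : Fin n → Fin k → Bool) :
    choiQUBO n k f ω δ l =
      (∑ i, (-ω * (∑ j, ind (l i j))
        + δ * (∑ j, ∑ j', if j < j' then ind (l i j) * ind (l i j') else 0)))
      + δ * ∑ i, ∑ j, ∑ i', ∑ j',
          (if i < i' ∧ (f i j).1 = (f i' j').1 ∧ (f i j).2 ≠ (f i' j').2
           then ind (l i j) * ind (l i' j') else 0) := by
  unfold choiQUBO
  rw [Finset.mul_sum, Finset.mul_sum, ← Finset.sum_add_distrib]

lemma clause_val {k : ℕ} (ω δ : ℝ) (g : Fin k → Bool) :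
    ∃ m : ℕ, (-ω * (∑ j, ind (g j))
        + δ * (∑ j, ∑ j', if j < j' then ind (g j) * ind (g j') else 0)
      = -ω * m + δ * ((m:ℝ)^2 - m)/2) ∧
      (Finset.univ.filter (fun j => g j = true)).card = m := by
  obtain ⟨m, hT, hP, hc⟩ := clause_sum g
  refine ⟨m, ?_, hc⟩
  rw [hT] at hP
  have hP' : (∑ j, ∑ j', if j < j' then ind (g j) * ind (g j') else 0)
      = ((m:ℝ)^2 - m)/2 := by linarith
  rw [hT, hP']; ring

/-- With `δ > ω > 0`, Choi's QUBO for a formula with `n` clauses is bounded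
below by `-n·ω`, and the bound is attained iff the formula is satisfiable. -/
theorem choi_lower_bound {V : Type*} [DecidableEq V] (n k : ℕ)
    (f : Fin n → Fin k → V × Bool) (ω δ : ℝ) (hω : 0 < ω) (hδ : ω < δ) :
    (∀ l, -(n : ℝ) * ω ≤ choiQUBO n k f ω δ l) ∧
    ((∃ l, choiQUBO n k f ω δ l = -(n : ℝ) * ω) ↔ ∃ x, Satisfies f x) := by
  classical
  have hδ0 : 0 < δ := hω.trans hδ
  -- conflict sum is nonneg
  have hCnonneg : ∀ l : Fin n → Fin k → Bool,
      0 ≤ ∑ i, ∑ j, ∑ i', ∑ j',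
        (if i < i' ∧ (f i j).1 = (f i' j').1 ∧ (f i j).2 ≠ (f i' j').2
         then ind (l i j) * ind (l i' j') else 0) := fun l =>
    Finset.sum_nonneg fun i _ => Finset.sum_nonneg fun j _ =>
      Finset.sum_nonneg fun i' _ => Finset.sum_nonneg fun j' _ => ite_ind_nonneg _ _ _
  have hconst : (∑ _i : Fin n, (-ω)) = -(n:ℝ) * ω := by
    simp [Finset.sum_const]
  constructor
  · intro l
    obtain ⟨m, hm⟩ := Classical.axiomOfChoice (fun i => clause_val ω δ (l i))
    rw [choi_decomp]
    have h1 : -(n:ℝ) * ω ≤ ∑ i, (-ω * (∑ j, ind (l i j))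
        + δ * (∑ j, ∑ j', if j < j' then ind (l i j) * ind (l i j') else 0)) := by
      rw [← hconst]
      refine Finset.sum_le_sum fun i _ => ?_
      rw [(hm i).1]
      exact (key_ineq_s19 ω δ hω hδ (m i)).1
    nlinarith [mul_nonneg hδ0.le (hCnonneg l)]
  · constructor
    · rintro ⟨l, hl⟩
      obtain ⟨m, hm⟩ := Classical.axiomOfChoice (fun i => clause_val ω δ (l i))
      rw [choi_decomp] at hl
      set A := ∑ i, (-ω * (∑ j, ind (l i j))
        + δ * (∑ j, ∑ j', if j < j' then ind (l i j) * ind (l i j') else 0)) with hA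
      set C := ∑ i, ∑ j, ∑ i', ∑ j',
        (if i < i' ∧ (f i j).1 = (f i' j').1 ∧ (f i j).2 ≠ (f i' j').2
         then ind (l i j) * ind (l i' j') else 0) with hC
      have hAge : -(n:ℝ) * ω ≤ A := by
        rw [hA, ← hconst]
        refine Finset.sum_le_sum fun i _ => ?_
        rw [(hm i).1]
        exact (key_ineq_s19 ω δ hω hδ (m i)).1
      have hCz : C = 0 := by nlinarith [hCnonneg l]
      have hAz : A = -(n:ℝ) * ω := by nlinarith [hCnonneg l]
      -- each clause term equals -ω
      have hterm : ∀ i, -ω * (∑ j, ind (l i j))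
          + δ * (∑ j, ∑ j', if j < j' then ind (l i j) * ind (l i j') else 0) = -ω := by
        intro i
        by_contra hne
        have hge : -ω ≤ -ω * (∑ j, ind (l i j))
            + δ * (∑ j, ∑ j', if j < j' then ind (l i j) * ind (l i j') else 0) := by
          rw [(hm i).1]; exact (key_ineq_s19 ω δ hω hδ (m i)).1
        have hlt : -ω < -ω * (∑ j, ind (l i j))
            + δ * (∑ j, ∑ j', if j < j' then ind (l i j) * ind (l i j') else 0) :=
          lt_of_le_of_ne hge (fun h => hne h.symm)
        have : (∑ _i : Fin n, (-ω)) < A := by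
          rw [hA]
          refine Finset.sum_lt_sum (fun i' _ => by
            rw [(hm i').1]; exact (key_ineq_s19 ω δ hω hδ (m i')).1) ⟨i, Finset.mem_univ i, hlt⟩
        rw [hconst, hAz] at this
        exact lt_irrefl _ this
      have hm1 : ∀ i, m i = 1 := fun i => by
        have := hterm i
        rw [(hm i).1] at this
        exact ((key_ineq_s19 ω δ hω hδ (m i)).2).1 this
      -- unique selected literal per clause
      have hsel : ∀ i, ∃ j₀ : Fin k, l i j₀ = true ∧ ∀ j, l i j = true → j = j₀ := by
        intro i
        have hcard : (Finset.univ.filter (fun j => l i j = true)).card = 1 := by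
          rw [(hm i).2, hm1 i]
        obtain ⟨j₀, hj₀⟩ := Finset.card_eq_one.1 hcard
        refine ⟨j₀, ?_, ?_⟩
        · have : j₀ ∈ Finset.univ.filter (fun j => l i j = true) := by
            rw [hj₀]; exact Finset.mem_singleton_self j₀
          exact (Finset.mem_filter.1 this).2
        · intro j hj
          have : j ∈ Finset.univ.filter (fun j => l i j = true) :=
            Finset.mem_filter.2 ⟨Finset.mem_univ j, hj⟩
          rw [hj₀] at this
          exact Finset.mem_singleton.1 this
      choose j₀ hj₀sel hj₀uniq using hsel
      -- no conflicts among selected literals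
      have hconf : ∀ i j i' j', (if i < i' ∧ (f i j).1 = (f i' j').1 ∧ (f i j).2 ≠ (f i' j').2
          then ind (l i j) * ind (l i' j') else 0) = 0 :=
        quad_zero _ (fun i j i' j' => ite_ind_nonneg _ _ _) (hC.symm.trans hCz)
      have hnoconf : ∀ i i', i ≠ i' →
          (f i (j₀ i)).1 = (f i' (j₀ i')).1 → (f i (j₀ i)).2 = (f i' (j₀ i')).2 := by
        intro i i' hne hv
        by_contra hb
        rcases lt_or_gt_of_ne hne with h | h
        · have := hconf i (j₀ i) i' (j₀ i')
          rw [if_pos ⟨h, hv, hb⟩, hj₀sel i, hj₀sel i'] at this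
          simp [ind] at this
        · have := hconf i' (j₀ i') i (j₀ i)
          rw [if_pos ⟨h, hv.symm, fun hh => hb hh.symm⟩, hj₀sel i, hj₀sel i'] at this
          simp [ind] at this
      refine ⟨fun v => if ∃ i, f i (j₀ i) = (v, true) then true else false, fun i => ?_⟩
      refine ⟨j₀ i, ?_⟩
      show (if ∃ i', f i' (j₀ i') = ((f i (j₀ i)).1, true) then true else false)
        = (f i (j₀ i)).2
      by_cases hb : (f i (j₀ i)).2 = true
      · rw [hb, if_pos ⟨i, by rw [← hb]⟩]
      · rw [Bool.not_eq_true] at hb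
        rw [hb, if_neg]
        rintro ⟨i', hi'⟩
        have hv : (f i (j₀ i)).1 = (f i' (j₀ i')).1 := by rw [hi']
        have hb' : (f i' (j₀ i')).2 = true := by rw [hi']
        by_cases hii : i = i'
        · subst hii; rw [hb'] at hb; exact Bool.false_ne_true hb.symm
        · have := hnoconf i i' hii hv
          rw [hb, hb'] at this
          exact Bool.false_ne_true this
    · rintro ⟨x, hx⟩
      choose j₀ hj₀ using hx
      refine ⟨fun i j => decide (j = j₀ i), ?_⟩
      unfold choiQUBO
      have hT : ∀ i : Fin n, (∑ j, ind (decide (j = j₀ i))) = 1 := by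
        intro i
        have : ∀ j : Fin k, ind (decide (j = j₀ i)) = if j = j₀ i then (1:ℝ) else 0 := by
          intro j; by_cases h : j = j₀ i <;> simp [ind, h]
        rw [Finset.sum_congr rfl fun j _ => this j, Finset.sum_ite_eq' Finset.univ (j₀ i) (fun _ => (1:ℝ))]
        simp
      have hP : ∀ i : Fin n, (∑ j, ∑ j', if j < j' then
          ind (decide (j = j₀ i)) * ind (decide (j' = j₀ i)) else 0) = 0 := by
        intro i
        refine Finset.sum_eq_zero fun j _ => Finset.sum_eq_zero fun j' _ => ?_
        split_ifs with h
        · by_cases hj : j = j₀ i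
          · have : j' ≠ j₀ i := fun hj' => absurd (hj.trans hj'.symm) h.ne
            simp [ind, this]
          · simp [ind, hj]
        · rfl
      have hCz : (∑ i, ∑ j, ∑ i', ∑ j',
          (if i < i' ∧ (f i j).1 = (f i' j').1 ∧ (f i j).2 ≠ (f i' j').2
           then ind (decide (j = j₀ i)) * ind (decide (j' = j₀ i')) else 0)) = 0 := by
        refine Finset.sum_eq_zero fun i _ => Finset.sum_eq_zero fun j _ =>
          Finset.sum_eq_zero fun i' _ => Finset.sum_eq_zero fun j' _ => ?_
        split_ifs with h
        · by_cases hj : j = j₀ i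
          · by_cases hj' : j' = j₀ i'
            · exfalso
              subst hj; subst hj'
              exact h.2.2 (by rw [← hj₀ i, ← hj₀ i', h.2.1])
            · simp [ind, hj']
          · simp [ind, hj]
        · rfl
      rw [Finset.sum_congr rfl fun i _ => hT i,
        Finset.sum_congr rfl fun i _ => hP i, hCz]
      simp [Finset.sum_const]
      ring
end
end
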